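/- arXiv:2011.04388 — 8 statements merged into one kernel-verified Lean document; each statement's English description precedes it below -/
import Mathlib

section
/- Let R be a commutative ring and x ∈ R. Define the third-order Pell polynomial sequence r : ℕ → R by r 0 = 0, r 1 = 1, r 2 = 2x, and r n = 2x·r(n-1) + r(n-3) for n ≥ 3. Then for every n ≥ 1, r n = ∑_{ℓ=0}^{⌊(n-1)/3⌋} binomial(n-1-2ℓ, ℓ) · (2x)^{n-1-3ℓ}. -/
/-! Summands with `3ℓ > n - 1` vanish, so the range of summation may be enlarged freely; after that,
Pascal's rule applied termwise shows that the right-hand side satisfies the same recurrence as `r`,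
and it has the same initial values. -/

open Finset

namespace ThirdOrderPell

variable {R : Type*} [CommRing R]

def term (y : R) (m ℓ : ℕ) : R :=
  ((m - 2 * ℓ).choose ℓ : R) * y ^ (m - 3 * ℓ)

/-- `explicitSum (2 * x) m` is the right-hand side of the formula for `r (m + 1)`. -/
def explicitSum (y : R) (m : ℕ) : R :=
  ∑ ℓ ∈ range (m / 3 + 1), term y m ℓ

lemma term_zero_right (y : R) (m : ℕ) : term y m 0 = y ^ m := by
  simp [term]

lemma term_eq_zero_of_lt (y : R) {m ℓ : ℕ} (h : m < 3 * ℓ) : term y m ℓ = 0 := by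
  rw [term, Nat.choose_eq_zero_of_lt (by omega), Nat.cast_zero, zero_mul]

/-- Pascal's rule, read along the shallow diagonals of Pascal's triangle. -/
lemma term_add_three_succ (y : R) (m ℓ : ℕ) :
    term y (m + 3) (ℓ + 1) = y * term y (m + 2) (ℓ + 1) + term y m ℓ := by
  rcases lt_trichotomy (3 * ℓ) m with h | rfl | h
  · obtain ⟨k, rfl⟩ : ∃ k, m = 3 * ℓ + k + 1 := ⟨m - 3 * ℓ - 1, by omega⟩
    unfold term
    rw [show 3 * ℓ + k + 1 + 3 - 2 * (ℓ + 1) = ℓ + k + 1 + 1 by omega,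
      show 3 * ℓ + k + 1 + 2 - 2 * (ℓ + 1) = ℓ + k + 1 by omega,
      show 3 * ℓ + k + 1 - 2 * ℓ = ℓ + k + 1 by omega,
      show 3 * ℓ + k + 1 + 3 - 3 * (ℓ + 1) = k + 1 by omega,
      show 3 * ℓ + k + 1 + 2 - 3 * (ℓ + 1) = k by omega,
      show 3 * ℓ + k + 1 - 3 * ℓ = k + 1 by omega, Nat.choose_succ_succ, Nat.cast_add]
    ring
  · rw [term_eq_zero_of_lt y (by omega : 3 * ℓ + 2 < 3 * (ℓ + 1))]
    simp [term, show 3 * ℓ + 3 - 2 * (ℓ + 1) = ℓ + 1 by omega,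
      show 3 * ℓ + 3 - 3 * (ℓ + 1) = 0 by omega, show 3 * ℓ - 2 * ℓ = ℓ by omega]
  · rw [term_eq_zero_of_lt y (by omega : m + 3 < 3 * (ℓ + 1)),
      term_eq_zero_of_lt y (by omega : m + 2 < 3 * (ℓ + 1)), term_eq_zero_of_lt y h]
    ring

lemma sum_range_term_eq_explicitSum (y : R) {m N : ℕ} (hN : m / 3 < N) :
    ∑ ℓ ∈ range N, term y m ℓ = explicitSum y m :=
  (sum_subset (range_subset_range.2 (by omega)) fun ℓ _ hℓ ↦
    term_eq_zero_of_lt y (by simp only [mem_range] at hℓ; omega)).symm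

lemma explicitSum_add_three (y : R) (m : ℕ) :
    explicitSum y (m + 3) = y * explicitSum y (m + 2) + explicitSum y m := by
  have hN : (m + 3) / 3 + 1 = m / 3 + 1 + 1 := by omega
  rw [explicitSum, hN, ← sum_range_term_eq_explicitSum y (by omega : (m + 2) / 3 < m / 3 + 1 + 1),
    ← sum_range_term_eq_explicitSum y (Nat.lt_succ_self (m / 3)), sum_range_succ',
    sum_range_succ' _ (m / 3 + 1)]
  simp only [term_add_three_succ, sum_add_distrib, term_zero_right, mul_add, mul_sum]
  ring

end ThirdOrderPell

open ThirdOrderPell in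
theorem third_order_pell_explicit_formula
    (R : Type*) [CommRing R] (x : R) (r : ℕ → R)
    (h0 : r 0 = 0) (h1 : r 1 = 1) (h2 : r 2 = 2 * x)
    (hrec : ∀ n, 3 ≤ n → r n = 2 * x * r (n - 1) + r (n - 3)) :
    ∀ n, 1 ≤ n →
      r n = ∑ ℓ ∈ Finset.range ((n - 1) / 3 + 1),
        (Nat.choose (n - 1 - 2 * ℓ) ℓ : R) * (2 * x) ^ (n - 1 - 3 * ℓ) := by
  suffices h : ∀ m, r (m + 1) = explicitSum (2 * x) m by
    intro n hn
    obtain ⟨m, rfl⟩ := Nat.exists_eq_add_of_le' hn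
    exact h m
  intro m
  induction m using Nat.strong_induction_on with
  | _ m ih =>
    match m, ih with
    | 0, _ => simp [h1, explicitSum, term]
    | 1, _ => simp [h2, explicitSum, term]
    | 2, _ =>
      simp [hrec 3 le_rfl, h2, h0, explicitSum, term]
      ring
    | m + 3, ih =>
      rw [explicitSum_add_three, ← ih (m + 2) (by omega), ← ih m (by omega)]
      exact hrec (m + 4) (by omega)
end

section
/- Let x ∈ ℝ. Define the second version of the third-order Pell polynomials s : ℕ → ℝ by s 0 = 0, s 1 = 2, s 2 = 2x, and s n = 2x·s(n-1) + s(n-3) for n ≥ 3. Then for every n ≥ 2, s n = ∑_{ℓ=0}^{⌊(n-1)/3⌋} (2x)^{n-1-3ℓ} · ((n-ℓ-1)/(n-2ℓ-1)) · binomial(n-2ℓ-1, ℓ), where the coefficient (n-ℓ-1)/(n-2ℓ-1)·binomial(n-2ℓ-1,ℓ) is interpreted as a real number (the denominator n-2ℓ-1 is a positive integer for all ℓ in the summation range when n ≥ 2). -/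
/-!
The summand coefficient `(n-ℓ-1)/(n-2ℓ-1) · C(n-2ℓ-1, ℓ)` is the Lucas-type coefficient
`c(a, ℓ) = (a+ℓ)/a · C(a, ℓ)` at `a = n-2ℓ-1`. Since `c(a, ℓ) = C(a, ℓ) + C(a-1, ℓ-1)`, it obeys
Pascal's rule `c(a+1, ℓ+1) = c(a, ℓ+1) + c(a, ℓ)`, which makes the explicit sums satisfy the same
recurrence `s(n) = 2x·s(n-1) + s(n-3)` term by term. Checking the three initial values
`n = 2, 3, 4` finishes the proof by strong induction.
-/

open Finset

/-- At `a = 0` the division by zero makes this `0`, whatever `ℓ` is. -/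
noncomputable def lucasCoeff (a ℓ : ℕ) : ℝ := ((a : ℝ) + ℓ) / a * a.choose ℓ

lemma lucasCoeff_eq_zero_of_lt {a ℓ : ℕ} (h : a < ℓ) : lucasCoeff a ℓ = 0 := by
  simp [lucasCoeff, Nat.choose_eq_zero_of_lt h]

lemma lucasCoeff_zero_right {a : ℕ} (ha : a ≠ 0) : lucasCoeff a 0 = 1 := by
  simp [lucasCoeff, ha]

lemma lucasCoeff_succ_succ {a : ℕ} (ha : a ≠ 0) (ℓ : ℕ) :
    lucasCoeff (a + 1) (ℓ + 1) = lucasCoeff a (ℓ + 1) + lucasCoeff a ℓ := by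
  have hpascal : ((a + 1).choose (ℓ + 1) : ℝ) = a.choose ℓ + a.choose (ℓ + 1) := by
    exact_mod_cast Nat.choose_succ_succ' a ℓ
  have habsorb : ((a : ℝ) + 1) * a.choose ℓ = (a + 1).choose (ℓ + 1) * (ℓ + 1) := by
    exact_mod_cast Nat.add_one_mul_choose_eq a ℓ
  have hkey : ((ℓ : ℝ) + 1) * a.choose (ℓ + 1) = ((a : ℝ) - ℓ) * a.choose ℓ := by
    linear_combination -habsorb - ((ℓ : ℝ) + 1) * hpascal
  have ha' : (a : ℝ) ≠ 0 := by exact_mod_cast ha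
  unfold lucasCoeff
  rw [hpascal]
  field_simp
  push_cast
  linear_combination -hkey

/-- The `ℓ`-th summand of the explicit formula for `s (m + 1)`. -/
noncomputable def pellTerm (x : ℝ) (m ℓ : ℕ) : ℝ := (2 * x) ^ (m - 3 * ℓ) * lucasCoeff (m - 2 * ℓ) ℓ

noncomputable def pellSum (x : ℝ) (m : ℕ) : ℝ := ∑ ℓ ∈ range (m / 3 + 1), pellTerm x m ℓ

section

variable (x : ℝ)

lemma pellTerm_zero_right {m : ℕ} (hm : m ≠ 0) : pellTerm x m 0 = (2 * x) ^ m := by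
  simp [pellTerm, lucasCoeff_zero_right hm]

lemma pellTerm_eq_zero_of_lt {m ℓ : ℕ} (h : m < 3 * ℓ) : pellTerm x m ℓ = 0 := by
  simp [pellTerm, lucasCoeff_eq_zero_of_lt (show m - 2 * ℓ < ℓ by omega)]

lemma pellTerm_add_three_succ {m ℓ : ℕ} (h : 2 * ℓ < m) :
    pellTerm x (m + 3) (ℓ + 1) = 2 * x * pellTerm x (m + 2) (ℓ + 1) + pellTerm x m ℓ := by
  obtain ⟨a, rfl⟩ : ∃ a, m = 2 * ℓ + a + 1 := ⟨m - 2 * ℓ - 1, by omega⟩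
  unfold pellTerm
  rw [show 2 * ℓ + a + 1 + 3 - 2 * (ℓ + 1) = a + 1 + 1 by omega,
    show 2 * ℓ + a + 1 + 2 - 2 * (ℓ + 1) = a + 1 by omega,
    show 2 * ℓ + a + 1 - 2 * ℓ = a + 1 by omega,
    show 2 * ℓ + a + 1 + 3 - 3 * (ℓ + 1) = a + 1 - ℓ by omega,
    show 2 * ℓ + a + 1 + 2 - 3 * (ℓ + 1) = a - ℓ by omega,
    show 2 * ℓ + a + 1 - 3 * ℓ = a + 1 - ℓ by omega,
    lucasCoeff_succ_succ a.succ_ne_zero]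
  rcases le_or_gt ℓ a with hℓa | haℓ
  · rw [show a + 1 - ℓ = a - ℓ + 1 by omega, pow_succ]
    ring
  · rw [lucasCoeff_eq_zero_of_lt (show a + 1 < ℓ + 1 by omega)]
    ring

lemma pellSum_eq_sum_range {m N : ℕ} (h : m < 3 * N) :
    pellSum x m = ∑ ℓ ∈ range N, pellTerm x m ℓ := by
  refine sum_subset (range_subset_range.2 (by omega)) fun ℓ _ hℓ => ?_
  exact pellTerm_eq_zero_of_lt x (by simp at hℓ; omega)

lemma pellSum_add_three {m : ℕ} (hm : m ≠ 0) :
    pellSum x (m + 3) = 2 * x * pellSum x (m + 2) + pellSum x m := by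
  have hsucc : ∀ k, 3 ≤ k → k ≤ m + 3 → pellSum x k = pellTerm x k 0 + ∑ ℓ ∈ range (m / 3 + 1), pellTerm x k (ℓ + 1) :=
    fun k hk hkm => by rw [pellSum_eq_sum_range x (N := m / 3 + 2) (by omega), sum_range_succ', add_comm]
  rw [hsucc (m + 3) (by omega) le_rfl, hsucc (m + 2) (by omega) (by omega),
    pellTerm_zero_right x (by omega), pellTerm_zero_right x (by omega), pellSum,
    sum_congr rfl fun ℓ hℓ => pellTerm_add_three_succ x (by simp at hℓ; omega),
    sum_add_distrib, mul_add, mul_sum]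
  ring

lemma pellTerm_pred_eq {n ℓ : ℕ} (h : 2 * ℓ < n) :
    pellTerm x (n - 1) ℓ = (2 * x) ^ (n - 1 - 3 * ℓ) *
      (((n : ℝ) - ℓ - 1) / ((n : ℝ) - 2 * ℓ - 1)) * (Nat.choose (n - 2 * ℓ - 1) ℓ : ℝ) := by
  rw [pellTerm, lucasCoeff, show n - 1 - 2 * ℓ = n - 2 * ℓ - 1 by omega,
    Nat.cast_sub (by omega), Nat.cast_sub (by omega)]
  push_cast
  ring_nf

end

theorem third_order_pell_second_version_explicit_formula
    (x : ℝ) (s : ℕ → ℝ)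
    (h0 : s 0 = 0) (h1 : s 1 = 2) (h2 : s 2 = 2 * x)
    (hrec : ∀ n, 3 ≤ n → s n = 2 * x * s (n - 1) + s (n - 3)) :
    ∀ n, 2 ≤ n →
      s n = ∑ ℓ ∈ Finset.range ((n - 1) / 3 + 1),
        (2 * x) ^ (n - 1 - 3 * ℓ) *
          (((n : ℝ) - ℓ - 1) / ((n : ℝ) - 2 * ℓ - 1)) *
          (Nat.choose (n - 2 * ℓ - 1) ℓ : ℝ) := by
  have hs : ∀ m, 1 ≤ m → s (m + 1) = pellSum x m := by
    intro m hm
    induction m using Nat.strong_induction_on with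
    | _ m ih =>
      match m, hm with
      | 1, _ => norm_num [pellSum, pellTerm, lucasCoeff, h2]
      | 2, _ => norm_num [hrec 3, pellSum, pellTerm, lucasCoeff, h0, h2]; ring
      | 3, _ =>
        norm_num [hrec 4, hrec 3, pellSum, pellTerm, lucasCoeff, sum_range_succ, h0, h1, h2]
        ring
      | k + 4, _ =>
        rw [hrec (k + 5) (by omega), show k + 4 = (k + 1) + 3 by omega,
          pellSum_add_three x k.succ_ne_zero, ← ih (k + 3) (by omega) (by omega),
          ← ih (k + 1) (by omega) (by omega)]
        rfl
  intro n hn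
  calc s n = s (n - 1 + 1) := by rw [Nat.sub_add_cancel (by omega)]
    _ = pellSum x (n - 1) := hs (n - 1) (by omega)
    _ = _ := sum_congr rfl fun ℓ hℓ => pellTerm_pred_eq x (by simp at hℓ; omega)
end

section
/- Let t, W ∈ ℂ with t ≠ 1, t ≠ -1, and W² = (1+t)(5-3t). Set z = (1-t)²(1+t), v₁ = 1/(1-t), v₂ = (1+t+W)/(2(t²-1)), and v₃ = (1+t-W)/(2(t²-1)). Then each of v₁, v₂, v₃ satisfies the cubic equation z·Y³ - 2Y + 1 = 0. -/
/-! For `z = (1 - t)²(1 + t)` the cubic `z Y³ - 2Y + 1` has the root `1 / (1 - t)`, and splitting off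
the corresponding linear factor leaves the quadratic `(t² - 1) Y² - (1 + t) Y + 1`, whose discriminant
is `(1 + t)(5 - 3t) = W²`; `v₂` and `v₃` are its two roots by the quadratic formula. -/

section CommRing

variable {R : Type*} [CommRing R]

theorem depressed_cubic_eq_mul (t Y : R) :
    (1 - t) ^ 2 * (1 + t) * Y ^ 3 - 2 * Y + 1 =
      (1 - (1 - t) * Y) * ((t ^ 2 - 1) * (Y * Y) + -(1 + t) * Y + 1) := by
  ring

theorem discrim_quadratic_factor (t : R) :
    discrim (t ^ 2 - 1) (-(1 + t)) 1 = (1 + t) * (5 - 3 * t) := by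
  rw [discrim]
  ring

end CommRing

section Field

variable {K : Type*} [Field K]

theorem depressed_cubic_eval_one_div {t : K} (ht : t ≠ 1) :
    (1 - t) ^ 2 * (1 + t) * (1 / (1 - t)) ^ 3 - 2 * (1 / (1 - t)) + 1 = 0 := by
  rw [depressed_cubic_eq_mul, mul_one_div_cancel (sub_ne_zero.mpr ht.symm), sub_self, zero_mul]

theorem depressed_cubic_eval_of_quadratic_root [NeZero (2 : K)] {t W Y : K} (ht1 : t ≠ 1)
    (ht2 : t ≠ -1) (hW : W ^ 2 = (1 + t) * (5 - 3 * t))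
    (hY : Y = (1 + t + W) / (2 * (t ^ 2 - 1)) ∨ Y = (1 + t - W) / (2 * (t ^ 2 - 1))) :
    (1 - t) ^ 2 * (1 + t) * Y ^ 3 - 2 * Y + 1 = 0 := by
  have ha : t ^ 2 - 1 ≠ 0 := by
    rw [sub_ne_zero, sq_ne_one_iff]
    exact ⟨ht1, ht2⟩
  have hdiscrim : discrim (t ^ 2 - 1) (-(1 + t)) 1 = W * W := by
    rw [discrim_quadratic_factor, ← hW, sq]
  have hquad := (quadratic_eq_zero_iff ha hdiscrim Y).mpr (by rwa [neg_neg])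
  rw [depressed_cubic_eq_mul, hquad, mul_zero]

end Field

theorem roots_of_depressed_cubic
    (t W z v₁ v₂ v₃ : ℂ) (ht1 : t ≠ 1) (ht2 : t ≠ -1)
    (hW : W ^ 2 = (1 + t) * (5 - 3 * t))
    (hz : z = (1 - t) ^ 2 * (1 + t))
    (hv1 : v₁ = 1 / (1 - t))
    (hv2 : v₂ = (1 + t + W) / (2 * (t ^ 2 - 1)))
    (hv3 : v₃ = (1 + t - W) / (2 * (t ^ 2 - 1))) :
    z * v₁ ^ 3 - 2 * v₁ + 1 = 0 ∧
    z * v₂ ^ 3 - 2 * v₂ + 1 = 0 ∧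
    z * v₃ ^ 3 - 2 * v₃ + 1 = 0 := by
  subst hz hv1
  exact ⟨depressed_cubic_eval_one_div ht1,
    depressed_cubic_eval_of_quadratic_root ht1 ht2 hW (.inl hv2),
    depressed_cubic_eval_of_quadratic_root ht1 ht2 hW (.inr hv3)⟩
end

section
/- Let t, W, x ∈ ℂ with t ∉ {1, -1, -1/3, 5/3}, W² = (1+t)(5-3t), and x³ = -1/z where z = (1-t)²(1+t). Set w₁ = 1-t, w₂ = (1+t-W)/2, w₃ = (1+t+W)/2. Then each of x·w₁, x·w₂, x·w₃ is a root of the characteristic equation X³ - 2x·X² - 1 = 0 of the third-order Pell recursion. -/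
/-! The substitution `X = x V` turns `X³ - 2xX² - 1` into `x³ (V³ - 2V² + z)` once `x³ z = -1`,
so it suffices that the `wᵢ` are the roots of `V³ - 2V² + z`. That cubic splits off the factor
`V - (1 - t)`, and the remaining quadratic `V² - (1 + t)V + (t² - 1)` has discriminant
`(1 + t)(5 - 3t) = W²`. -/

theorem pell_char_eq_zero_of_cubic_eq_zero {R : Type*} [CommRing R] {x z w : R}
    (hxz : x ^ 3 * z = -1) (hw : w ^ 3 - 2 * w ^ 2 + z = 0) :
    (x * w) ^ 3 - 2 * x * (x * w) ^ 2 - 1 = 0 := by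
  linear_combination x ^ 3 * hw - hxz

-- The quadratic factor is written in the shape `a * (w * w) + b * w + c` of `quadratic_eq_zero_iff`.
theorem cubic_eq_mul_quadratic {R : Type*} [CommRing R] (t w : R) :
    w ^ 3 - 2 * w ^ 2 + (1 - t) ^ 2 * (1 + t) =
      (w - (1 - t)) * (1 * (w * w) + -(1 + t) * w + (t ^ 2 - 1)) := by
  ring

theorem quadratic_eq_zero_of_sq_eq {K : Type*} [Field K] [NeZero (2 : K)] {t W w : K}
    (hW : W ^ 2 = (1 + t) * (5 - 3 * t)) (hw : w = (1 + t - W) / 2 ∨ w = (1 + t + W) / 2) :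
    1 * (w * w) + -(1 + t) * w + (t ^ 2 - 1) = 0 := by
  have hdiscrim : discrim 1 (-(1 + t)) (t ^ 2 - 1) = W * W := by
    rw [discrim]; linear_combination -hW
  rw [quadratic_eq_zero_iff one_ne_zero hdiscrim]
  rcases hw with rfl | rfl
  · right; ring
  · left; ring

theorem characteristic_roots_general
    (t W x z w₁ w₂ w₃ : ℂ)
    (ht1 : t ≠ 1) (ht2 : t ≠ -1)
    (hW : W ^ 2 = (1 + t) * (5 - 3 * t))
    (hz : z = (1 - t) ^ 2 * (1 + t))
    (hx : x ^ 3 = -1 / z)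
    (hw1 : w₁ = 1 - t)
    (hw2 : w₂ = (1 + t - W) / 2)
    (hw3 : w₃ = (1 + t + W) / 2) :
    (x * w₁) ^ 3 - 2 * x * (x * w₁) ^ 2 - 1 = 0 ∧
    (x * w₂) ^ 3 - 2 * x * (x * w₂) ^ 2 - 1 = 0 ∧
    (x * w₃) ^ 3 - 2 * x * (x * w₃) ^ 2 - 1 = 0 := by
  have hz0 : z ≠ 0 := by
    rw [hz]
    exact mul_ne_zero (pow_ne_zero 2 (sub_ne_zero.mpr ht1.symm))
      (by rwa [add_comm, ← sub_neg_eq_add, sub_ne_zero])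
  have hxz : x ^ 3 * z = -1 := by rw [hx, div_mul_cancel₀ _ hz0]
  refine ⟨?_, ?_, ?_⟩ <;> refine pell_char_eq_zero_of_cubic_eq_zero hxz ?_ <;>
    rw [hz, cubic_eq_mul_quadratic]
  · rw [hw1, sub_self, zero_mul]
  · exact mul_eq_zero_of_right _ (quadratic_eq_zero_of_sq_eq hW (.inl hw2))
  · exact mul_eq_zero_of_right _ (quadratic_eq_zero_of_sq_eq hW (.inr hw3))

theorem characteristic_roots
    (t W x z w₁ w₂ w₃ : ℂ)
    (ht1 : t ≠ 1) (ht2 : t ≠ -1) (ht3 : t ≠ -1/3) (ht4 : t ≠ 5/3)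
    (hW : W ^ 2 = (1 + t) * (5 - 3 * t))
    (hz : z = (1 - t) ^ 2 * (1 + t))
    (hx : x ^ 3 = -1 / z)
    (hw1 : w₁ = 1 - t)
    (hw2 : w₂ = (1 + t - W) / 2)
    (hw3 : w₃ = (1 + t + W) / 2) :
    (x * w₁) ^ 3 - 2 * x * (x * w₁) ^ 2 - 1 = 0 ∧
    (x * w₂) ^ 3 - 2 * x * (x * w₂) ^ 2 - 1 = 0 ∧
    (x * w₃) ^ 3 - 2 * x * (x * w₃) ^ 2 - 1 = 0 :=
  characteristic_roots_general t W x z w₁ w₂ w₃ ht1 ht2 hW hz hx hw1 hw2 hw3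
end

section
/- Let t, W, x ∈ ℂ with t ∉ {1, -1, -1/3, 5/3}, W² = (1+t)(5-3t), and x³ = -1/z where z = (1-t)²(1+t). Set w₁ = 1-t, w₂ = (1+t-W)/2, w₃ = (1+t+W)/2, A = -1/(1+3t), B = 1/(2(1+3t)) - (3/2)·W/((5-3t)(1+3t)), C = 1/(2(1+3t)) + (3/2)·W/((5-3t)(1+3t)). Define r : ℕ → ℂ by r 0 = 0, r 1 = 1, r 2 = 2x, and r n = 2x·r(n-1) + r(n-3) for n ≥ 3. Then for every n ≥ 1, r n = x^{n-1}·(A·w₁ⁿ + B·w₂ⁿ + C·w₃ⁿ). -/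
/-!
Each root `w` of `V³ - 2V² + z` satisfies `w ^ (n + 3) = 2 w ^ (n + 2) - z wⁿ`, hence so does
`sₙ = A w₁ⁿ + B w₂ⁿ + C w₃ⁿ`. Since `x³ z = -1`, the sequence `xⁿ sₙ₊₁` then satisfies the
recurrence `uₙ₊₃ = 2x uₙ₊₂ + uₙ` of `rₙ₊₁`. The weights `A, B, C` are chosen so that
`(s₀, s₁, s₂) = (0, 1, 2)`, which makes the two sequences start alike, and a third-order linear
recurrence determines a solution from its first three terms.
-/

namespace LinearRecurrence

variable {R : Type*} [CommRing R]

def thirdOrder (c₀ c₁ c₂ : R) : LinearRecurrence R := ⟨3, ![c₀, c₁, c₂]⟩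

variable {c₀ c₁ c₂ : R} {u v : ℕ → R}

theorem isSolution_thirdOrder_iff :
    (thirdOrder c₀ c₁ c₂).IsSolution u ↔
      ∀ n, u (n + 3) = c₀ * u n + c₁ * u (n + 1) + c₂ * u (n + 2) := by
  refine forall_congr' fun n ↦ ?_
  change u (n + 3) = ∑ i : Fin 3, ![c₀, c₁, c₂] i * u (n + i) ↔ _
  simp [Fin.sum_univ_three, add_assoc]

theorem IsSolution.comp_add_right {E : LinearRecurrence R} (h : E.IsSolution u) (k : ℕ) :
    E.IsSolution fun n ↦ u (n + k) := fun n ↦ by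
  simpa only [add_right_comm] using h (n + k)

theorem isSolution_thirdOrder_pow {q : R} (hq : q ^ 3 = c₀ + c₁ * q + c₂ * q ^ 2) :
    (thirdOrder c₀ c₁ c₂).IsSolution fun n ↦ q ^ n :=
  isSolution_thirdOrder_iff.2 fun n ↦ by linear_combination q ^ n * hq

theorem IsSolution.thirdOrder_pow_mul (h : (thirdOrder c₀ c₁ c₂).IsSolution u) (x : R) :
    (thirdOrder (x ^ 3 * c₀) (x ^ 2 * c₁) (x * c₂)).IsSolution fun n ↦ x ^ n * u n :=
  isSolution_thirdOrder_iff.2 fun n ↦ by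
    rw [isSolution_thirdOrder_iff.1 h n]
    ring

theorem eq_of_isSolution_thirdOrder (hu : (thirdOrder c₀ c₁ c₂).IsSolution u)
    (hv : (thirdOrder c₀ c₁ c₂).IsSolution v) (h₀ : u 0 = v 0) (h₁ : u 1 = v 1) (h₂ : u 2 = v 2) :
    u = v :=
  (eq_iff_eqOn_range_order _ u v hu hv).2 fun n hn ↦ by
    simp only [thirdOrder, Finset.coe_range, Set.mem_Iio] at hn
    interval_cases n <;> assumption

theorem isSolution_thirdOrder_weighted_pow_sum {p q s : R}
    (hp : p ^ 3 = c₀ + c₁ * p + c₂ * p ^ 2) (hq : q ^ 3 = c₀ + c₁ * q + c₂ * q ^ 2)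
    (hs : s ^ 3 = c₀ + c₁ * s + c₂ * s ^ 2) (a b c : R) :
    (thirdOrder c₀ c₁ c₂).IsSolution fun n ↦ a * p ^ n + b * q ^ n + c * s ^ n := by
  rw [is_sol_iff_mem_solSpace]
  have geom {w : R} (hw : w ^ 3 = c₀ + c₁ * w + c₂ * w ^ 2) :=
    (is_sol_iff_mem_solSpace _ _).1 (isSolution_thirdOrder_pow hw)
  exact add_mem (add_mem (Submodule.smul_mem _ a (geom hp)) (Submodule.smul_mem _ b (geom hq)))
    (Submodule.smul_mem _ c (geom hs))

end LinearRecurrence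

open LinearRecurrence

theorem half_add_cubic_eq_zero {t W : ℂ} (hW : W ^ 2 = (1 + t) * (5 - 3 * t)) :
    ((1 + t + W) / 2) ^ 3 - 2 * ((1 + t + W) / 2) ^ 2 + (1 - t) ^ 2 * (1 + t) = 0 := by
  linear_combination ((3 * t - 1) / 8 + W / 8) * hW

theorem isSolution_binet_power_sum {t W : ℂ} (hW : W ^ 2 = (1 + t) * (5 - 3 * t)) (A B C : ℂ) :
    (thirdOrder (-((1 - t) ^ 2 * (1 + t))) 0 2).IsSolution fun n ↦
      A * (1 - t) ^ n + B * ((1 + t - W) / 2) ^ n + C * ((1 + t + W) / 2) ^ n := by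
  have hw₂ := half_add_cubic_eq_zero (W := -W) (by rw [neg_sq, hW])
  rw [← sub_eq_add_neg] at hw₂
  exact isSolution_thirdOrder_weighted_pow_sum (by ring) (by linear_combination hw₂)
    (by linear_combination half_add_cubic_eq_zero hW) A B C

theorem binet_coeffs_power_sums {t W A B C : ℂ} (ht₁ : 1 + 3 * t ≠ 0) (ht₂ : 5 - 3 * t ≠ 0)
    (hW : W ^ 2 = (1 + t) * (5 - 3 * t))
    (hA : A = -1 / (1 + 3 * t))
    (hB : B = 1 / (2 * (1 + 3 * t)) - (3 / 2) * W / ((5 - 3 * t) * (1 + 3 * t)))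
    (hC : C = 1 / (2 * (1 + 3 * t)) + (3 / 2) * W / ((5 - 3 * t) * (1 + 3 * t))) :
    A + B + C = 0 ∧ A * (1 - t) + B * ((1 + t - W) / 2) + C * ((1 + t + W) / 2) = 1 ∧
      A * (1 - t) ^ 2 + B * ((1 + t - W) / 2) ^ 2 + C * ((1 + t + W) / 2) ^ 2 = 2 := by
  have hA' : A * (1 + 3 * t) = -1 := by rw [hA]; field_simp
  have hBC : (B + C) * (1 + 3 * t) = 1 := by rw [hB, hC]; field_simp; ring
  have hCB : (C - B) * ((5 - 3 * t) * (1 + 3 * t)) = 3 * W := by rw [hB, hC]; field_simp; ring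
  have hD : (5 - 3 * t) * (1 + 3 * t) ≠ 0 := mul_ne_zero ht₂ ht₁
  refine ⟨mul_right_cancel₀ ht₁ ?_, mul_left_cancel₀ hD ?_, mul_left_cancel₀ hD ?_⟩
  · linear_combination hA' + hBC
  · linear_combination ((1 - t) * (5 - 3 * t)) * hA' + ((1 + t) * (5 - 3 * t) / 2) * hBC +
      (W / 2) * hCB + (3 / 2) * hW
  · linear_combination ((1 - t) ^ 2 * (5 - 3 * t)) * hA' +
      (((1 + t) ^ 2 + W ^ 2) * (5 - 3 * t) / 4) * hBC + ((1 + t) * W / 2) * hCB +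
      ((11 + 3 * t) / 4) * hW

theorem isSolution_pell_succ {x : ℂ} {r : ℕ → ℂ}
    (hrec : ∀ n, 3 ≤ n → r n = 2 * x * r (n - 1) + r (n - 3)) :
    (thirdOrder 1 0 (2 * x)).IsSolution fun n ↦ r (n + 1) :=
  isSolution_thirdOrder_iff.2 fun n ↦ by
    rw [hrec (n + 3 + 1) (by omega), Nat.add_sub_cancel, show n + 3 + 1 - 3 = n + 1 by omega]
    ring

theorem binet_formula_third_order_pell
    (t W x z w₁ w₂ w₃ A B C : ℂ)
    (ht1 : t ≠ 1) (ht2 : t ≠ -1) (ht3 : t ≠ -1/3) (ht4 : t ≠ 5/3)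
    (hW : W ^ 2 = (1 + t) * (5 - 3 * t))
    (hz : z = (1 - t) ^ 2 * (1 + t))
    (hx : x ^ 3 = -1 / z)
    (hw1 : w₁ = 1 - t)
    (hw2 : w₂ = (1 + t - W) / 2)
    (hw3 : w₃ = (1 + t + W) / 2)
    (hA : A = -1 / (1 + 3 * t))
    (hB : B = 1 / (2 * (1 + 3 * t)) - (3 / 2) * W / ((5 - 3 * t) * (1 + 3 * t)))
    (hC : C = 1 / (2 * (1 + 3 * t)) + (3 / 2) * W / ((5 - 3 * t) * (1 + 3 * t)))
    (r : ℕ → ℂ)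
    (h0 : r 0 = 0) (h1 : r 1 = 1) (h2 : r 2 = 2 * x)
    (hrec : ∀ n, 3 ≤ n → r n = 2 * x * r (n - 1) + r (n - 3)) :
    ∀ n, 1 ≤ n → r n = x ^ (n - 1) * (A * w₁ ^ n + B * w₂ ^ n + C * w₃ ^ n) := by
  have hz0 : z ≠ 0 := by
    rw [hz]
    exact mul_ne_zero (pow_ne_zero 2 (sub_ne_zero.2 ht1.symm))
      (by contrapose! ht2; linear_combination ht2)
  have hxz : x ^ 3 * -z = 1 := by rw [hx]; field_simp
  obtain ⟨hs₀, hs₁, hs₂⟩ := binet_coeffs_power_sums (by contrapose! ht3; linear_combination ht3 / 3)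
    (by contrapose! ht4; linear_combination -ht4 / 3) hW hA hB hC
  subst hz hw1 hw2 hw3
  set s : ℕ → ℂ := fun n ↦ A * (1 - t) ^ n + B * ((1 + t - W) / 2) ^ n + C * ((1 + t + W) / 2) ^ n
  have hs : (thirdOrder _ 0 2).IsSolution s := isSolution_binet_power_sum hW A B C
  have hs₃ : s 3 = 4 := by
    rw [isSolution_thirdOrder_iff.1 hs 0]
    norm_num [s, hs₀, hs₂]
  have hbinet : (thirdOrder 1 0 (2 * x)).IsSolution fun n ↦ x ^ n * s (n + 1) := by
    simpa [hxz, mul_comm x] using (hs.comp_add_right 1).thirdOrder_pow_mul x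
  have hshift := eq_of_isSolution_thirdOrder (isSolution_pell_succ hrec) hbinet
    (by simp [h1, s, hs₁]) (by simp [h2, s, hs₂]; ring)
    (by rw [hrec 3 le_rfl]; simp [h0, h2, hs₃]; ring)
  intro n hn
  obtain ⟨m, rfl⟩ := Nat.exists_eq_add_of_le' hn
  simpa using congrFun hshift m
end

section
/- Let t, W, x ∈ ℂ with t ∉ {1, -1, -1/3, 5/3, 0}, W² = (1+t)(5-3t), and x³ = -1/z where z = (1-t)²(1+t). Set w₁ = 1-t, w₂ = (1+t-W)/2, w₃ = (1+t+W)/2, A = 2t/((1+3t)(1-t)), B = t/((1+3t)(t-1)) + (3t²-3t-2)·W/((t²-1)(3t+1)(3t-5)), C = t/((1+3t)(t-1)) - (3t²-3t-2)·W/((t²-1)(3t+1)(3t-5)). Define s : ℕ → ℂ by s 0 = 0, s 1 = 2, s 2 = 2x, and s n = 2x·s(n-1) + s(n-3) for n ≥ 3. Then for every n ≥ 1, s n = x^{n-1}·(A·w₁ⁿ + B·w₂ⁿ + C·w₃ⁿ). -/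
/-!
Put `u n = A w₁ⁿ + B w₂ⁿ + C w₃ⁿ`. Since `x³ z = -1`, multiplying a root `w` of `V³ - 2V² + z`
by `x` gives a root of `λ³ - 2xλ² - 1`, the characteristic polynomial of the Pell recurrence.
Hence `n ↦ xⁿ u n` solves the recurrence, as does `n ↦ x s n`; a solution of a third-order
recurrence is determined by its first three terms, and `u 0 = 0`, `u 1 = u 2 = 2` match
`s 0`, `s 1`, `s 2`.
-/

open Finset LinearRecurrence

namespace LinearRecurrence

variable {R : Type*} [CommRing R]

def thirdOrderPell (x : R) : LinearRecurrence R := ⟨3, ![1, 0, 2 * x]⟩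

theorem isSolution_thirdOrderPell_iff {x : R} {u : ℕ → R} :
    (thirdOrderPell x).IsSolution u ↔ ∀ n, u (n + 3) = 2 * x * u (n + 2) + u n := by
  refine forall_congr' fun n => ?_
  change u (n + 3) = ∑ i : Fin 3, ![1, 0, 2 * x] i * u (n + i) ↔ _
  simp [Fin.sum_univ_three, add_comm (u n)]

theorem isSolution_thirdOrderPell_geom {x q : R} (hq : q ^ 3 = 2 * x * q ^ 2 + 1) :
    (thirdOrderPell x).IsSolution (q ^ ·) :=
  isSolution_thirdOrderPell_iff.2 fun n => by linear_combination q ^ n * hq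

theorem mul_pow_three_eq_of_cubic {x z w : R} (hxz : x ^ 3 * z = -1)
    (hw : w ^ 3 - 2 * w ^ 2 + z = 0) : (x * w) ^ 3 = 2 * x * (x * w) ^ 2 + 1 := by
  linear_combination x ^ 3 * hw - hxz

theorem isSolution_thirdOrderPell_binet {x z : R} (hxz : x ^ 3 * z = -1) {ι : Type*}
    [Fintype ι] {c w : ι → R} (hw : ∀ i, w i ^ 3 - 2 * w i ^ 2 + z = 0) :
    (thirdOrderPell x).IsSolution fun n => x ^ n * ∑ i, c i * w i ^ n := by
  have hsum : (fun n => x ^ n * ∑ i, c i * w i ^ n) = ∑ i, c i • fun n => (x * w i) ^ n := by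
    ext n
    simp only [Finset.sum_apply, Pi.smul_apply, smul_eq_mul, mul_sum, mul_pow]
    exact sum_congr rfl fun i _ => by ring
  rw [hsum, is_sol_iff_mem_solSpace]
  exact Submodule.sum_mem _ fun i _ => Submodule.smul_mem _ _
    (isSolution_thirdOrderPell_geom (mul_pow_three_eq_of_cubic hxz (hw i)))

/-- Multiplying by `x` avoids the truncated exponent `n - 1` at `n = 0`. -/
theorem thirdOrderPell_eq_binet {K : Type*} [Field K] {x z : K} (hxz : x ^ 3 * z = -1)
    {ι : Type*} [Fintype ι] {c w : ι → K} (hw : ∀ i, w i ^ 3 - 2 * w i ^ 2 + z = 0)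
    {s : ℕ → K} (hs : (thirdOrderPell x).IsSolution s)
    (hinit : ∀ n < 3, x * s n = x ^ n * ∑ i, c i * w i ^ n) {n : ℕ} (hn : 1 ≤ n) :
    s n = x ^ (n - 1) * ∑ i, c i * w i ^ n := by
  have hx : x ≠ 0 := by rintro rfl; simp at hxz
  have hxs : x • s = fun n => x ^ n * ∑ i, c i * w i ^ n :=
    ((thirdOrderPell x).eq_iff_eqOn_range_order _ _ ((thirdOrderPell x).solSpace.smul_mem x hs)
      (isSolution_thirdOrderPell_binet hxz hw)).2 fun n hn => hinit n (mem_range.1 hn)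
  obtain ⟨k, rfl⟩ : ∃ k, n = k + 1 := ⟨n - 1, by omega⟩
  refine mul_left_cancel₀ hx ?_
  rw [← smul_eq_mul, ← Pi.smul_apply, hxs, add_tsub_cancel_right]
  beta_reduce
  ring

end LinearRecurrence

section PellParameters

variable {K : Type*} [Field K] {t W : K}

def pellCoeffs (t W : K) : Fin 3 → K :=
  ![2 * t / ((1 + 3 * t) * (1 - t)),
    t / ((1 + 3 * t) * (t - 1)) +
      (3 * t ^ 2 - 3 * t - 2) * W / ((t ^ 2 - 1) * (3 * t + 1) * (3 * t - 5)),
    t / ((1 + 3 * t) * (t - 1)) -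
      (3 * t ^ 2 - 3 * t - 2) * W / ((t ^ 2 - 1) * (3 * t + 1) * (3 * t - 5))]

def pellRoots (t W : K) : Fin 3 → K := ![1 - t, (1 + t - W) / 2, (1 + t + W) / 2]

def pellBinet (t W : K) (n : ℕ) : K := ∑ i, pellCoeffs t W i * pellRoots t W i ^ n

theorem pellBinet_zero (t W : K) : pellBinet t W 0 = 0 := by
  simp only [pellBinet, pellCoeffs, Fin.sum_univ_three, pow_zero, mul_one, Fin.isValue,
    Matrix.cons_val_zero, Matrix.cons_val_one, Matrix.cons_val]
  rw [show (1 : K) - t = -(t - 1) by ring, mul_neg, div_neg]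
  ring

variable [NeZero (2 : K)] (hW : W ^ 2 = (1 + t) * (5 - 3 * t))
include hW

theorem pellRoots_cubic (i : Fin 3) :
    pellRoots t W i ^ 3 - 2 * pellRoots t W i ^ 2 + (1 - t) ^ 2 * (1 + t) = 0 := by
  fin_cases i <;> simp only [pellRoots, Fin.zero_eta, Fin.mk_one, Fin.reduceFinMk, Fin.isValue,
    Matrix.cons_val_zero, Matrix.cons_val_one, Matrix.cons_val]
  · ring
  · field_simp
    linear_combination (3 * t - 1 - W) * hW
  · field_simp
    linear_combination (3 * t - 1 + W) * hW

variable (hsub : t - 1 ≠ 0) (hadd : t + 1 ≠ 0) (h3t1 : 1 + 3 * t ≠ 0) (h3t5 : 3 * t - 5 ≠ 0)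
include hsub hadd h3t1 h3t5

theorem pellBinet_one : pellBinet t W 1 = 2 := by
  simp only [pellBinet, pellCoeffs, pellRoots, pow_one, Fin.sum_univ_three, Fin.isValue,
    Matrix.cons_val_zero, Matrix.cons_val_one, Matrix.cons_val]
  rw [show t ^ 2 - 1 = (t - 1) * (t + 1) by ring, show 3 * t + 1 = 1 + 3 * t by ring,
    show 1 - t = -(t - 1) by ring]
  rw [mul_comm 3 t] at h3t1 h3t5 ⊢
  field_simp
  linear_combination (-2 * (3 * t ^ 2 - 3 * t - 2)) * hW

theorem pellBinet_two : pellBinet t W 2 = 2 := by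
  simp only [pellBinet, pellCoeffs, pellRoots, Fin.sum_univ_three, Fin.isValue,
    Matrix.cons_val_zero, Matrix.cons_val_one, Matrix.cons_val]
  rw [show t ^ 2 - 1 = (t - 1) * (t + 1) by ring, show 3 * t + 1 = 1 + 3 * t by ring,
    show 1 - t = -(t - 1) by ring]
  rw [mul_comm 3 t] at h3t1 h3t5 ⊢
  field_simp
  linear_combination (2 * t * (t + 1) * (3 * t - 5) - 4 * (3 * t ^ 2 - 3 * t - 2) * (1 + t)) * hW

end PellParameters

theorem binet_formula_third_order_pell_second_version_general
    (t W x z w₁ w₂ w₃ A B C : ℂ)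
    (ht1 : t ≠ 1) (ht2 : t ≠ -1) (ht3 : t ≠ -1/3) (ht4 : t ≠ 5/3)
    (hW : W ^ 2 = (1 + t) * (5 - 3 * t))
    (hz : z = (1 - t) ^ 2 * (1 + t))
    (hx : x ^ 3 = -1 / z)
    (hw1 : w₁ = 1 - t)
    (hw2 : w₂ = (1 + t - W) / 2)
    (hw3 : w₃ = (1 + t + W) / 2)
    (hA : A = 2 * t / ((1 + 3 * t) * (1 - t)))
    (hB : B = t / ((1 + 3 * t) * (t - 1)) +
      (3 * t ^ 2 - 3 * t - 2) * W / ((t ^ 2 - 1) * (3 * t + 1) * (3 * t - 5)))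
    (hC : C = t / ((1 + 3 * t) * (t - 1)) -
      (3 * t ^ 2 - 3 * t - 2) * W / ((t ^ 2 - 1) * (3 * t + 1) * (3 * t - 5)))
    (s : ℕ → ℂ)
    (h0 : s 0 = 0) (h1 : s 1 = 2) (h2 : s 2 = 2 * x)
    (hrec : ∀ n, 3 ≤ n → s n = 2 * x * s (n - 1) + s (n - 3)) :
    ∀ n, 1 ≤ n → s n = x ^ (n - 1) * (A * w₁ ^ n + B * w₂ ^ n + C * w₃ ^ n) := by
  replace ht1 : t - 1 ≠ 0 := sub_ne_zero.2 ht1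
  replace ht2 : t + 1 ≠ 0 := by contrapose! ht2; linear_combination ht2
  replace ht3 : 1 + 3 * t ≠ 0 := by contrapose! ht3; linear_combination ht3 / 3
  replace ht4 : 3 * t - 5 ≠ 0 := by contrapose! ht4; linear_combination ht4 / 3
  have hz0 : z ≠ 0 := hz ▸ mul_ne_zero (pow_ne_zero 2 (by rwa [← neg_sub, neg_ne_zero]))
    (by rwa [add_comm])
  have hxz : x ^ 3 * z = -1 := by rw [hx, div_mul_cancel₀ _ hz0]
  have hs : (thirdOrderPell x).IsSolution s := isSolution_thirdOrderPell_iff.2 fun n => by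
    simpa using hrec (n + 3) (by omega)
  have hinit : ∀ n < 3, x * s n = x ^ n * pellBinet t W n := by
    intro n hn
    interval_cases n
    · simp [h0, pellBinet_zero]
    · simp [h1, pellBinet_one hW ht1 ht2 ht3 ht4]
    · rw [h2, pellBinet_two hW ht1 ht2 ht3 ht4]
      ring
  have hc : ![A, B, C] = pellCoeffs t W := by rw [hA, hB, hC]; rfl
  have hw : ![w₁, w₂, w₃] = pellRoots t W := by rw [hw1, hw2, hw3]; rfl
  intro n hn
  have hbinet := thirdOrderPell_eq_binet hxz (hz ▸ pellRoots_cubic hW) hs hinit hn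
  rw [← hc, ← hw] at hbinet
  simpa [Fin.sum_univ_three] using hbinet

theorem binet_formula_third_order_pell_second_version
    (t W x z w₁ w₂ w₃ A B C : ℂ)
    (ht1 : t ≠ 1) (ht2 : t ≠ -1) (ht3 : t ≠ -1/3) (ht4 : t ≠ 5/3) (ht5 : t ≠ 0)
    (hW : W ^ 2 = (1 + t) * (5 - 3 * t))
    (hz : z = (1 - t) ^ 2 * (1 + t))
    (hx : x ^ 3 = -1 / z)
    (hw1 : w₁ = 1 - t)
    (hw2 : w₂ = (1 + t - W) / 2)
    (hw3 : w₃ = (1 + t + W) / 2)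
    (hA : A = 2 * t / ((1 + 3 * t) * (1 - t)))
    (hB : B = t / ((1 + 3 * t) * (t - 1)) +
      (3 * t ^ 2 - 3 * t - 2) * W / ((t ^ 2 - 1) * (3 * t + 1) * (3 * t - 5)))
    (hC : C = t / ((1 + 3 * t) * (t - 1)) -
      (3 * t ^ 2 - 3 * t - 2) * W / ((t ^ 2 - 1) * (3 * t + 1) * (3 * t - 5)))
    (s : ℕ → ℂ)
    (h0 : s 0 = 0) (h1 : s 1 = 2) (h2 : s 2 = 2 * x)
    (hrec : ∀ n, 3 ≤ n → s n = 2 * x * s (n - 1) + s (n - 3)) :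
    ∀ n, 1 ≤ n → s n = x ^ (n - 1) * (A * w₁ ^ n + B * w₂ ^ n + C * w₃ ^ n) :=
  binet_formula_third_order_pell_second_version_general t W x z w₁ w₂ w₃ A B C ht1 ht2 ht3 ht4 hW hz
    hx hw1 hw2 hw3 hA hB hC s h0 h1 h2 hrec
end

section
/- Let U ∈ ℚ[[z]] be the formal power series U = ∑_{n ≥ 1} (1/n)·binomial(3n-2, n-1)·(1/2^{3n-1})·zⁿ. Then U·(U - 2)² = z as formal power series, i.e., U is the compositional solution of z = u(u-2)² with U(0) = 0. -/
/-
With `V' = dV/dX`, differentiating `V (V - 2)² = X` gives `(3V² - 8V + 4) V' = 1`, so `V'` and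
`V''` are rational functions of `V` and the algebraic relation yields the hypergeometric equation
`X (32 - 27X) V'' + (16 - 27X) V' + 3V = 4`. Comparing coefficients, this equation together with
`V(0) = 0` determines `V` by a first-order recurrence, which the closed-form coefficients also
satisfy. A root `V` with `V(0) = 0` exists by Hensel's lemma, since `0` is a simple root of
`u (u - 2)²` modulo `X`.
-/

open PowerSeries

namespace PowerSeries

variable {R : Type*} [CommRing R]

@[simp]
theorem derivative_ofNat (n : ℕ) [n.AtLeastTwo] : d⁄dX R (ofNat(n) : R⟦X⟧) = 0 :=
  Derivation.map_natCast _ n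

@[simp]
theorem coeff_ofNat_mul (k n : ℕ) [k.AtLeastTwo] (f : R⟦X⟧) :
    coeff n (ofNat(k) * f) = ofNat(k) * coeff n f := by
  rw [← map_ofNat C, coeff_C_mul]

theorem exists_mul_sub_two_sq_eq_X (h2 : IsUnit (2 : R)) :
    ∃ V : R⟦X⟧, constantCoeff V = 0 ∧ V * (V - 2) ^ 2 = X := by
  let f : Polynomial R⟦X⟧ := Polynomial.X * (Polynomial.X - 2) ^ 2 - Polynomial.C X
  have hf : f.Monic := by unfold f; monicity!
  have h2' : IsUnit (2 : R⟦X⟧) := by simpa only [map_ofNat] using h2.map (C (R := R))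
  obtain ⟨V, hV, hV0⟩ := HenselianRing.is_henselian (I := Ideal.span {X}) f hf 0
    (by simp [f]) (.map _ (by simpa [f] using h2'))
  rw [sub_zero, Ideal.mem_span_singleton, X_dvd_iff] at hV0
  exact ⟨V, hV0, by simpa [f, sub_eq_zero] using hV⟩

theorem derivative_mul_of_mul_sub_two_sq_eq_X {V : R⟦X⟧} (hV : V * (V - 2) ^ 2 = X) :
    (3 * V ^ 2 - 8 * V + 4) * d⁄dX R V = 1 := by
  have h := congrArg (d⁄dX R) hV
  simp only [Derivation.leibniz, Derivation.leibniz_pow, map_sub, smul_eq_mul, nsmul_eq_mul,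
    derivative_X, derivative_ofNat] at h
  linear_combination h

noncomputable def rootODE (V : R⟦X⟧) : R⟦X⟧ :=
  (32 * X - 27 * X ^ 2) * d⁄dX R (d⁄dX R V) + (16 - 27 * X) * d⁄dX R V + 3 * V

theorem rootODE_eq_four {V : R⟦X⟧} (hV : V * (V - 2) ^ 2 = X) : rootODE V = 4 := by
  set q := 3 * V ^ 2 - 8 * V + 4
  have h1 : q * d⁄dX R V = 1 := derivative_mul_of_mul_sub_two_sq_eq_X hV
  have h2 : q * d⁄dX R (d⁄dX R V) + (6 * V - 8) * d⁄dX R V ^ 2 = 0 := by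
    have h := congrArg (d⁄dX R) h1
    simp only [q, Derivation.leibniz, Derivation.leibniz_pow, map_sub, map_add, smul_eq_mul,
      nsmul_eq_mul, derivative_ofNat, Derivation.map_one_eq_zero] at h
    linear_combination h
  -- `q` is a unit; after multiplying by `q³`, `h1` and `h2` eliminate `V'` and `V''`.
  refine ((IsUnit.of_mul_eq_one _ h1).pow 3).mul_left_cancel ?_
  unfold rootODE
  linear_combination (32 * X - 27 * X ^ 2) * q ^ 2 * h2
    - (32 * X - 27 * X ^ 2) * (6 * V - 8) * (q * d⁄dX R V + 1) * h1 + (16 - 27 * X) * q ^ 2 * h1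
    + (81 * V ^ 4 - 432 * V ^ 3 + 864 * V ^ 2 - 672 * V + 176 + 216 * X - 162 * V * X) * hV

theorem rootODE_sub (V W : R⟦X⟧) : rootODE (V - W) = rootODE V - rootODE W := by
  simp only [rootODE, map_sub]
  ring

theorem coeff_zero_rootODE (V : R⟦X⟧) :
    coeff 0 (rootODE V) = 16 * coeff 1 V + 3 * coeff 0 V := by
  simp only [rootODE, sub_mul, pow_two, mul_assoc, map_add, map_sub, coeff_ofNat_mul,
    coeff_zero_X_mul, coeff_derivative]
  push_cast
  ring

theorem coeff_succ_rootODE (V : R⟦X⟧) (m : ℕ) :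
    coeff (m + 1) (rootODE V) = 16 * (m + 2) * (2 * m + 3) * coeff (m + 2) V -
      3 * (3 * m + 2) * (3 * m + 4) * coeff (m + 1) V := by
  simp only [rootODE, sub_mul, pow_two, mul_assoc, map_add, map_sub, coeff_ofNat_mul,
    coeff_succ_X_mul, coeff_derivative]
  rcases m with _ | m
  · simp only [coeff_zero_X_mul]
    push_cast
    ring
  · simp only [coeff_succ_X_mul, coeff_derivative]
    push_cast
    ring

theorem eq_of_rootODE_eq [IsDomain R] [CharZero R] {V W : R⟦X⟧}
    (h : rootODE V = rootODE W) (h0 : constantCoeff V = constantCoeff W) : V = W := by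
  set U := V - W with hU
  have hL : rootODE U = 0 := by rw [rootODE_sub, h, sub_self]
  have hU0 : coeff 0 U = 0 := by simp [hU, h0]
  have hsucc : ∀ n, coeff (n + 1) U = 0 := by
    intro n
    induction n with
    | zero =>
      have h1 := congrArg (coeff 0) hL
      rw [coeff_zero_rootODE, hU0, map_zero] at h1
      simpa using h1
    | succ m ih =>
      have hm := congrArg (coeff (m + 1)) hL
      rw [coeff_succ_rootODE, ih, mul_zero, sub_zero, map_zero] at hm
      have : (16 * (m + 2) * (2 * m + 3) : R) ≠ 0 := by norm_cast
      exact (mul_eq_zero.mp hm).resolve_left this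
  rw [← sub_eq_zero]
  ext (_ | n)
  · exact hU0
  · exact hsucc n

end PowerSeries

theorem Nat.mul_choose_three_mul_add_four (m : ℕ) :
    2 * (m + 1) * (2 * m + 3) * (3 * m + 4).choose (m + 1) =
      3 * (3 * m + 2) * (3 * m + 4) * (3 * m + 1).choose m := by
  have h1 : (3 * m + 4) * (3 * m + 3).choose m = (3 * m + 4).choose (m + 1) * (m + 1) :=
    Nat.add_one_mul_choose_eq _ _
  have h2 : (3 * m + 2).choose m * (3 * m + 3) = (3 * m + 3).choose m * (2 * m + 3) := by
    rw [Nat.choose_mul_succ_eq]; congr 2; omega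
  have h3 : (3 * m + 1).choose m * (3 * m + 2) = (3 * m + 2).choose m * (2 * m + 2) := by
    rw [Nat.choose_mul_succ_eq]; congr 2; omega
  zify at *
  linear_combination -2 * (2 * (m : ℤ) + 3) * h1 - 2 * (3 * (m : ℤ) + 4) * h2
    - 3 * (3 * (m : ℤ) + 4) * h3

noncomputable def lagrangeSeries : PowerSeries ℚ :=
  PowerSeries.mk fun n : ℕ => if n = 0 then 0 else
    (1 / (n : ℚ)) * (Nat.choose (3 * n - 2) (n - 1) : ℚ) * (1 / 2 ^ (3 * n - 1))

theorem coeff_succ_succ_lagrangeSeries (m : ℕ) :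
    16 * (m + 2) * (2 * m + 3) * coeff (m + 2) lagrangeSeries =
      3 * (3 * m + 2) * (3 * m + 4) * coeff (m + 1) lagrangeSeries := by
  have h := Nat.mul_choose_three_mul_add_four m
  simp only [lagrangeSeries, coeff_mk, add_eq_zero, one_ne_zero, OfNat.ofNat_ne_zero, and_false,
    if_false]
  rw [show 3 * (m + 2) - 2 = 3 * m + 4 by omega, show 3 * (m + 2) - 1 = 3 * m + 2 + 3 by omega,
    show 3 * (m + 1) - 2 = 3 * m + 1 by omega, show 3 * (m + 1) - 1 = 3 * m + 2 by omega,
    show m + 2 - 1 = m + 1 by omega, Nat.add_sub_cancel, pow_add]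
  qify at h
  field_simp
  push_cast
  linear_combination 8 * ((m : ℚ) + 2) * h

theorem rootODE_lagrangeSeries : rootODE lagrangeSeries = 4 := by
  rw [← map_ofNat C]
  ext (_ | m)
  · rw [coeff_zero_rootODE, coeff_zero_C]
    norm_num [lagrangeSeries]
  · rw [coeff_succ_rootODE, coeff_succ_succ_lagrangeSeries, sub_self, coeff_C,
      if_neg m.succ_ne_zero]

theorem lagrange_inversion_series_satisfies_equation :
    (PowerSeries.mk (fun n : ℕ => if n = 0 then 0 else
        (1 / (n : ℚ)) * (Nat.choose (3 * n - 2) (n - 1) : ℚ) *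
          (1 / 2 ^ (3 * n - 1))) : PowerSeries ℚ) *
      ((PowerSeries.mk (fun n : ℕ => if n = 0 then 0 else
        (1 / (n : ℚ)) * (Nat.choose (3 * n - 2) (n - 1) : ℚ) *
          (1 / 2 ^ (3 * n - 1))) : PowerSeries ℚ) - 2) ^ 2 = PowerSeries.X := by
  obtain ⟨V, hV0, hV⟩ := exists_mul_sub_two_sq_eq_X (R := ℚ) (.mk0 2 two_ne_zero)
  have hL : lagrangeSeries = V :=
    eq_of_rootODE_eq (by rw [rootODE_lagrangeSeries, rootODE_eq_four hV])
      (by simp [hV0, lagrangeSeries])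
  change lagrangeSeries * (lagrangeSeries - 2) ^ 2 = X
  rw [hL, hV]
end

section
/- Let U ∈ ℚ[[z]] be the formal power series U = ∑_{m ≥ 1} (1/m)·binomial(3m-2, m-1)·(1/2^{3m-1})·zᵐ, which satisfies U·(U-2)² = z. Fix n ∈ ℕ. Then the formal power series -(2 - U)ⁿ·(3U - 2)⁻¹ (well-defined since 3U - 2 has invertible constant term -2) has, for every ℓ ≥ 0, z^ℓ-coefficient equal to (2 : ℚ)^{(n : ℤ) - 3ℓ - 1} · (∏_{i=0}^{ℓ-1} (3ℓ - n - i)) / ℓ!, i.e., 2^{n-3ℓ-1} times the generalized binomial coefficient C(3ℓ-n, ℓ). -/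
/-!
Write `Fₙ = -(2 - U)ⁿ (3U - 2)⁻¹` and `cₙ(ℓ) = 2^(n - 3ℓ - 1) C(3ℓ - n, ℓ)` for `n ∈ ℤ`.
Since `U (2 - U)² = z`, we have `(2 - U)³ = 2 (2 - U)² - z`, hence `Fₙ₊₃ = 2 Fₙ₊₂ - z Fₙ`, and
Pascal's rule gives the same recurrence for the `cₙ`; so only `n = 0, 1, 2` remain.
Differentiating `U (U - 2)² = z` gives `U' (U - 2) (3U - 2) = 1`, so `F₋₁ = U'`, whose
coefficients `c₋₁` are read off the given expansion of `U`, and `F₀ = (2 - U) U'`. The latter solves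
the first-order equation `3z F₀' + F₀ = 4z U'' + 2U'`, i.e. `(3ℓ + 1) [z^ℓ] F₀ = (4ℓ + 2) [z^ℓ] U'`,
which is the absorption identity between `c₀` and `c₋₁`. Finally `3 F₁ = 4 F₀ + 1` and
`F₂ = 2 F₁ - z F₋₁`.
-/

open PowerSeries

theorem Ring.choose_eq_prod_range_div {K : Type*} [Field K] [CharZero K] (r : K) (k : ℕ) :
    Ring.choose r k = (∏ i ∈ Finset.range k, (r - i)) / k.factorial := by
  rw [Ring.choose_eq_smul, ← Polynomial.aeval_eq_smeval, ← Polynomial.eval_map_algebraMap,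
    descPochhammer_map, descPochhammer_eval_eq_prod_range, smul_eq_mul, inv_mul_eq_div]

theorem Ring.add_one_mul_choose {K : Type*} [Field K] [CharZero K] (r : K) (k : ℕ) :
    (r + 1) * Ring.choose r k = (r + 1 - k) * Ring.choose (r + 1) k := by
  rcases k with _ | k
  · simp
  simp only [Ring.choose_eq_prod_range_div, Finset.prod_range_succ' (fun i : ℕ => r + 1 - i),
    Finset.prod_range_succ (fun i : ℕ => r - i)]
  push_cast
  simp only [add_sub_add_right_eq_sub, sub_zero]
  ring

theorem PowerSeries.coeff_X_mul_derivative {R : Type*} [CommSemiring R] (f : R⟦X⟧) (n : ℕ) :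
    coeff n (X * d⁄dX R f) = n * coeff n f := by
  rcases n with _ | n
  · simp
  · rw [coeff_succ_X_mul, coeff_derivative, mul_comm]; push_cast; rfl

@[simp]
theorem PowerSeries.coeff_ofNat_mul_s14 {R : Type*} [CommSemiring R] (a : ℕ) [a.AtLeastTwo]
    (f : R⟦X⟧) (n : ℕ) : coeff n ((ofNat(a) : R⟦X⟧) * f) = ofNat(a) * coeff n f := by
  rw [← map_ofNat C, coeff_C_mul]

@[simp]
theorem PowerSeries.derivative_ofNat_s14 {R : Type*} [CommSemiring R] (a : ℕ) [a.AtLeastTwo] :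
    d⁄dX R (ofNat(a) : R⟦X⟧) = 0 := by
  rw [← map_ofNat C, derivative_C]

noncomputable def binetCoeff (n : ℤ) (ℓ : ℕ) : ℚ :=
  2 ^ (n - 3 * ℓ - 1) * Ring.choose (3 * ℓ - n : ℚ) ℓ

theorem binetCoeff_add_three_succ (n : ℤ) (ℓ : ℕ) :
    binetCoeff (n + 3) (ℓ + 1) = 2 * binetCoeff (n + 2) (ℓ + 1) - binetCoeff n ℓ := by
  simp only [binetCoeff]
  rw [show n + 2 - 3 * ((ℓ + 1 : ℕ) : ℤ) - 1 = (n - 3 * ℓ - 1) + (-1) by push_cast; ring,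
    show n + 3 - 3 * ((ℓ + 1 : ℕ) : ℤ) - 1 = n - 3 * ℓ - 1 by push_cast; ring,
    show (3 * ((ℓ + 1 : ℕ) : ℚ) - ((n + 2 : ℤ) : ℚ)) = (3 * ℓ - n) + 1 by push_cast; ring,
    show (3 * ((ℓ + 1 : ℕ) : ℚ) - ((n + 3 : ℤ) : ℚ)) = 3 * ℓ - n by push_cast; ring,
    zpow_add₀ (two_ne_zero' ℚ), Ring.choose_succ_succ]
  norm_num
  ring

theorem binetCoeff_add_three_zero (n : ℤ) : binetCoeff (n + 3) 0 = 2 * binetCoeff (n + 2) 0 := by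
  simp only [binetCoeff, Ring.choose_zero_right, Nat.cast_zero, mul_zero, sub_zero, mul_one]
  rw [← zpow_one_add₀ (two_ne_zero' ℚ)]
  ring_nf

theorem mk_binetCoeff_add_three (n : ℤ) :
    mk (binetCoeff (n + 3)) = 2 * mk (binetCoeff (n + 2)) - X * mk (binetCoeff n) := by
  ext (_ | ℓ) <;> simp only [coeff_mk, map_sub, coeff_ofNat_mul_s14]
  · rw [coeff_zero_X_mul, sub_zero, binetCoeff_add_three_zero]
  · rw [coeff_succ_X_mul, coeff_mk, binetCoeff_add_three_succ]

theorem add_one_mul_binetCoeff (n : ℤ) (ℓ : ℕ) :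
    (3 * ℓ - n + 1) * binetCoeff n ℓ = 2 * (2 * ℓ - n + 1) * binetCoeff (n - 1) ℓ := by
  simp only [binetCoeff]
  rw [show n - 1 - 3 * (ℓ : ℤ) - 1 = (n - 3 * ℓ - 1) + (-1) by ring,
    show (3 * (ℓ : ℚ) - ((n - 1 : ℤ) : ℚ)) = (3 * ℓ - n) + 1 by push_cast; ring,
    zpow_add₀ (two_ne_zero' ℚ)]
  linear_combination (2 : ℚ) ^ (n - 3 * ℓ - 1) * Ring.add_one_mul_choose (3 * ℓ - n : ℚ) ℓ

theorem binetCoeff_neg_one (ℓ : ℕ) :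
    binetCoeff (-1) ℓ = (3 * ℓ + 1).choose ℓ / 2 ^ (3 * ℓ + 2) := by
  rw [binetCoeff, show (3 * ℓ - ((-1 : ℤ) : ℚ)) = ((3 * ℓ + 1 : ℕ) : ℚ) by push_cast; ring,
    Ring.choose_natCast, show (-1 - 3 * ℓ - 1 : ℤ) = -((3 * ℓ + 2 : ℕ) : ℤ) by push_cast; ring,
    zpow_neg, zpow_natCast]
  ring

theorem three_mul_mk_binetCoeff_one : 3 * mk (binetCoeff 1) = 4 * mk (binetCoeff 0) + 1 := by
  ext (_ | ℓ) <;>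
    simp only [coeff_mk, map_add, coeff_ofNat_mul_s14, coeff_one, if_neg (Nat.succ_ne_zero _)]
  · norm_num [binetCoeff, Ring.choose_zero_right]
  · have h := add_one_mul_binetCoeff 1 (ℓ + 1)
    rw [sub_self] at h
    push_cast at h
    apply mul_left_cancel₀ (by positivity : (ℓ + 1 : ℚ) ≠ 0)
    linear_combination h

section

variable {R : Type*} [CommRing R] {U : R⟦X⟧}

theorem derivative_mul_sub_two_mul_eq_one (hUeq : U * (U - 2) ^ 2 = X) :
    d⁄dX R U * ((U - 2) * (3 * U - 2)) = 1 := by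
  have h := congrArg (d⁄dX R) hUeq
  simp only [Derivation.leibniz, Derivation.leibniz_pow, Nat.add_one_sub_one, pow_one, map_sub,
    derivative_ofNat_s14, sub_zero, smul_eq_mul, nsmul_eq_mul, Nat.cast_ofNat, derivative_X] at h
  linear_combination h

theorem ode_two_sub_mul_derivative (hUeq : U * (U - 2) ^ 2 = X) :
    3 * (X * d⁄dX R ((2 - U) * d⁄dX R U)) + (2 - U) * d⁄dX R U =
      4 * (X * d⁄dX R (d⁄dX R U)) + 2 * d⁄dX R U := by
  have hP := derivative_mul_sub_two_mul_eq_one hUeq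
  have hP' := congrArg (d⁄dX R) hP
  simp only [Derivation.leibniz, map_sub, smul_eq_mul, derivative_ofNat_s14, mul_zero, add_zero,
    sub_zero, Derivation.map_one_eq_zero, zero_sub, mul_neg] at hP' ⊢
  linear_combination (-U * (U - 2)) * hP' + U * d⁄dX R U * hP +
    ((3 * U - 2) * d⁄dX R (d⁄dX R U) + 3 * d⁄dX R U ^ 2) * hUeq

end

section

variable {U : ℚ⟦X⟧}

theorem derivative_eq_mk_binetCoeff_neg_one
    (hU : U = mk fun m : ℕ => if m = 0 then 0 else
      (1 / (m : ℚ)) * (Nat.choose (3 * m - 2) (m - 1) : ℚ) * (1 / 2 ^ (3 * m - 1))) :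
    d⁄dX ℚ U = mk (binetCoeff (-1)) := by
  ext ℓ
  rw [hU, coeff_derivative, coeff_mk, coeff_mk, if_neg ℓ.succ_ne_zero, binetCoeff_neg_one,
    show 3 * (ℓ + 1) - 2 = 3 * ℓ + 1 by omega, show 3 * (ℓ + 1) - 1 = 3 * ℓ + 2 by omega,
    Nat.add_sub_cancel]
  field_simp
  push_cast
  ring

theorem two_sub_mul_derivative_eq_mk_binetCoeff_zero (hUeq : U * (U - 2) ^ 2 = X)
    (hU' : d⁄dX ℚ U = mk (binetCoeff (-1))) : (2 - U) * d⁄dX ℚ U = mk (binetCoeff 0) := by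
  ext ℓ
  have hode := congrArg (coeff ℓ) (ode_two_sub_mul_derivative hUeq)
  -- keeps `hU'` from rewriting inside `F`
  set F := (2 - U) * d⁄dX ℚ U
  simp only [map_add, coeff_ofNat_mul_s14, coeff_X_mul_derivative, hU', coeff_mk] at hode
  have habs := add_one_mul_binetCoeff 0 ℓ
  rw [Int.cast_zero, sub_zero, zero_sub] at habs
  apply mul_left_cancel₀ (by positivity : (3 * ℓ + 1 : ℚ) ≠ 0)
  rw [coeff_mk]
  linear_combination hode - habs

theorem three_mul_sub_two_mul_mk_binetCoeff (hUeq : U * (U - 2) ^ 2 = X)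
    (hU' : d⁄dX ℚ U = mk (binetCoeff (-1))) :
    ∀ n : ℕ, (3 * U - 2) * mk (binetCoeff n) = -(2 - U) ^ n
  | 0 => by
    rw [Nat.cast_zero, ← two_sub_mul_derivative_eq_mk_binetCoeff_zero hUeq hU']
    linear_combination -derivative_mul_sub_two_mul_eq_one hUeq
  | 1 => by
    have h0 := three_mul_sub_two_mul_mk_binetCoeff hUeq hU' 0
    have h3 : (3 : ℚ⟦X⟧) ≠ 0 := by
      rw [← map_ofNat C]
      exact (map_ne_zero_iff _ C_injective).mpr three_ne_zero
    apply mul_left_cancel₀ h3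
    linear_combination (3 * U - 2) * three_mul_mk_binetCoeff_one + 4 * h0
  | 2 => by
    have h1 := three_mul_sub_two_mul_mk_binetCoeff hUeq hU' 1
    rw [Nat.cast_one, pow_one] at h1
    have hrec : mk (binetCoeff 2) = 2 * mk (binetCoeff 1) - X * d⁄dX ℚ U := by
      rw [hU']; exact mk_binetCoeff_add_three (-1)
    linear_combination (3 * U - 2) * hrec + 2 * h1 -
      U * (U - 2) * derivative_mul_sub_two_mul_eq_one hUeq + (3 * U - 2) * d⁄dX ℚ U * hUeq
  | n + 3 => by
    have hn := three_mul_sub_two_mul_mk_binetCoeff hUeq hU' n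
    have hn2 := three_mul_sub_two_mul_mk_binetCoeff hUeq hU' (n + 2)
    push_cast at hn2 ⊢
    linear_combination (3 * U - 2) * mk_binetCoeff_add_three n + 2 * hn2 - X * hn -
      (2 - U) ^ n * hUeq

end

theorem first_binet_term_coefficients
    (U : PowerSeries ℚ)
    (hU : U = PowerSeries.mk (fun m : ℕ => if m = 0 then 0 else
      (1 / (m : ℚ)) * (Nat.choose (3 * m - 2) (m - 1) : ℚ) * (1 / 2 ^ (3 * m - 1))))
    (hUeq : U * (U - 2) ^ 2 = PowerSeries.X)
    (n : ℕ) :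
    ∀ ℓ : ℕ,
      PowerSeries.coeff ℓ (-((2 - U) ^ n * (3 * U - 2)⁻¹)) =
        (2 : ℚ) ^ ((n : ℤ) - 3 * ℓ - 1) *
          (∏ i ∈ Finset.range ℓ, ((3 * ℓ : ℤ) - n - i : ℚ)) / (Nat.factorial ℓ : ℚ) := by
  intro ℓ
  have hunit : constantCoeff (3 * U - 2) ≠ 0 := by
    have h := congrArg constantCoeff (derivative_mul_sub_two_mul_eq_one hUeq)
    rw [map_mul, map_mul, map_one] at h
    exact right_ne_zero_of_mul (right_ne_zero_of_mul_eq_one h)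
  have hF : mk (binetCoeff n) = -(2 - U) ^ n * (3 * U - 2)⁻¹ := by
    rw [PowerSeries.eq_mul_inv_iff_mul_eq hunit, mul_comm]
    exact three_mul_sub_two_mul_mk_binetCoeff hUeq (derivative_eq_mk_binetCoeff_neg_one hU) n
  rw [← neg_mul, ← hF, coeff_mk, binetCoeff, Ring.choose_eq_prod_range_div]
  push_cast
  ring
end
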